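/- Let A be a central arrangement in Q^l with integer defining forms, none divisible by any prime. If a prime p is (σ,2)-lucky for A (i.e., σ-lucky for every ideal ⟨α_i, α_j⟩_Z with codim(H_i ∩ H_j) = 2), then p is good for A, i.e., the reduction of Q(A) = ∏ α_i modulo p is a reduced polynomial. -/

import Mathlib

open MvPolynomial
open scoped Classical

/-- The affine hyperplane solution set `{x | ∑ aₖ xₖ = b}` in `K^l`. -/
def hypSet (K : Type*) [CommRing K] {l : ℕ} (a : Fin l → K) (b : K) : Set (Fin l → K) :=
  {x | ∑ k, a k * x k = b}

/-- Dimension of a subset of `K^l` (intended: an affine subspace), with `adim ∅ = -1`. -/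
noncomputable def adim (K : Type*) [CommRing K] {l : ℕ} (S : Set (Fin l → K)) : ℤ :=
  if S = ∅ then -1 else Module.finrank K (affineSpan K S).direction

/-- The leading term (exponent) `LT_σ(f)` of `f` with respect to the term ordering `σ`. -/
noncomputable def LTerm {l : ℕ} (σ : MonomialOrder (Fin l)) (f : MvPolynomial (Fin l) ℤ) :
    Fin l →₀ ℕ :=
  σ.toSyn.symm (f.support.sup fun d => σ.toSyn d)

/-- The leading coefficient `LC_σ(f)` of `f` with respect to `σ`. -/
noncomputable def LCoef {l : ℕ} (σ : MonomialOrder (Fin l)) (f : MvPolynomial (Fin l) ℤ) : ℤ :=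
  f.coeff (LTerm σ f)

/-- The leading monomial `LM_σ(f) = LC_σ(f)·LT_σ(f)` of `f`, as a polynomial. -/
noncomputable def LMon {l : ℕ} (σ : MonomialOrder (Fin l)) (f : MvPolynomial (Fin l) ℤ) :
    MvPolynomial (Fin l) ℤ :=
  monomial (LTerm σ f) (LCoef σ f)

/-- `G` is a minimal strong `σ`-Gröbner basis of the ideal `I ⊆ ℤ[x₁,…,x_l]`. -/
def MinStrongGB {l : ℕ} (σ : MonomialOrder (Fin l)) (G : Finset (MvPolynomial (Fin l) ℤ))
    (I : Ideal (MvPolynomial (Fin l) ℤ)) : Prop :=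
  (∀ g ∈ G, g ≠ 0) ∧ Ideal.span (G : Set (MvPolynomial (Fin l) ℤ)) = I ∧
  (∀ f ∈ I, f ≠ 0 → ∃ g ∈ G, LMon σ g ∣ LMon σ f) ∧
  (∀ g ∈ G, ∀ g' ∈ G, g ≠ g' → ¬ LMon σ g ∣ LMon σ g')

/-- `p` is `σ`-lucky for `I`: it divides no leading coefficient of (any) minimal strong
`σ`-Gröbner basis of `I`. -/
def SigmaLucky {l : ℕ} (σ : MonomialOrder (Fin l)) (p : ℕ)
    (I : Ideal (MvPolynomial (Fin l) ℤ)) : Prop :=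
  ∀ G : Finset (MvPolynomial (Fin l) ℤ), MinStrongGB σ G I → ∀ g ∈ G, ¬ (p : ℤ) ∣ LCoef σ g

/-- The linear form `∑ aₖ xₖ` as a polynomial in `ℤ[x₁,…,x_l]`. -/
noncomputable def intForm {l : ℕ} (a : Fin l → ℤ) : MvPolynomial (Fin l) ℤ :=
  ∑ k, C (a k) * X k

/-- `p` is `(σ,κ)`-lucky for the arrangement with forms `a`: `p` is `σ`-lucky for every ideal
`⟨α_{i₁},…,α_{i_κ}⟩_ℤ` with `codim(H_{i₁} ∩ ⋯ ∩ H_{i_κ}) = κ`. -/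
noncomputable def SigmaKLucky {l n : ℕ} (σ : MonomialOrder (Fin l)) (a : Fin n → Fin l → ℤ)
    (κ p : ℕ) : Prop :=
  ∀ t : Fin κ → Fin n, StrictMono t →
    adim ℚ (⋂ j, hypSet ℚ (fun k => (a (t j) k : ℚ)) 0) = (l : ℤ) - κ →
    SigmaLucky σ p (Ideal.span (Set.range fun j => intForm (a (t j))))

/-- No prime number divides (all the coefficients of) any of the forms `αᵢ`. -/
def Primitive {l n : ℕ} (a : Fin n → Fin l → ℤ) : Prop :=
  ∀ (i : Fin n) (q : ℕ), q.Prime → ∃ k, ¬ (q : ℤ) ∣ a i k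

/-!
Each `αᵢ` stays a nonzero linear form modulo `p`, hence irreducible, so if `Q(𝒜) mod p` is
not squarefree then `αⱼ ≡ c αᵢ (mod p)` for some `i < j`. As `αᵢ, αⱼ` are not proportional,
`codim(Hᵢ ∩ Hⱼ) = 2` and `p` is `σ`-lucky for `I = ⟨αᵢ, αⱼ⟩`. Luckiness makes the lattice
`M = ℤαᵢ + ℤαⱼ` saturated at `p`: if `p h ∈ M`, the leading term of the form `p h` is
divisible by that of a basis element `g` whose leading coefficient is prime to `p`; then `g`
has the same leading variable, its linear part lies in `M`, and subtracting a multiple of it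
from `h` lowers the leading variable. For `h = (αⱼ - c αᵢ) / p` this yields a rational
relation between `αᵢ` and `αⱼ`, a contradiction.

Luckiness only has content because minimal strong Gröbner bases over `ℤ` exist: the leading
coefficients at an exponent `d` form an ideal of `ℤ` growing with `d`, and Dickson's lemma
together with the ascending chain condition leaves finitely many exponents at which to take
generators.
-/

theorem Monotone.exists_finset_forall_exists_le_and_apply_le {α β : Type*} [PartialOrder α]
    [WellQuasiOrderedLE α] [Preorder β] [WellFoundedGT β] {f : α → β} (hf : Monotone f) :
    ∃ D : Finset α, ∀ a, ∃ d ∈ D, d ≤ a ∧ f a ≤ f d := by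
  set T : Set α := {a | ∀ b < a, ¬ f a ≤ f b}
  have hT : ∀ a, ∃ d ∈ T, d ≤ a ∧ f a ≤ f d := by
    intro a
    induction a using WellFoundedLT.induction with
    | _ a ih =>
      by_cases ha : a ∈ T
      · exact ⟨a, ha, le_rfl, le_rfl⟩
      · obtain ⟨b, hba, hab⟩ : ∃ b < a, f a ≤ f b := by simpa [T] using ha
        obtain ⟨d, hdT, hdb, hbd⟩ := ih b hba
        exact ⟨d, hdT, hdb.trans hba.le, hab.trans hbd⟩
  -- an infinite `T` contains an increasing sequence, along which `f` would strictly increase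
  have hfin : T.Finite := by
    by_contra hinf
    let s := Set.Infinite.natEmbedding T hinf
    obtain ⟨g, hg⟩ := wellQuasiOrdered_le.exists_monotone_subseq fun n => (s n : α)
    refine not_strictMono_of_wellFoundedGT (fun n => f (s (g n)))
      (strictMono_nat_of_lt_succ fun n => ?_)
    have hlt : (s (g n) : α) < s (g (n + 1)) := (hg _ _ n.le_succ).lt_of_ne fun h =>
      n.succ_ne_self (g.injective (s.injective (Subtype.ext h))).symm
    exact (hf hlt.le).lt_of_not_ge ((s (g (n + 1))).2 _ hlt)
  exact ⟨hfin.toFinset, fun a => by simpa using hT a⟩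

namespace MonomialOrder

open MvPolynomial

variable {ι R : Type*} [CommRing R] (σ : MonomialOrder ι)

-- Its nonzero elements are the leading coefficients of the elements of `I` of degree `d`.
def leadingCoeffIdeal (I : Ideal (MvPolynomial ι R)) (d : ι →₀ ℕ) : Ideal R where
  carrier := {c | ∃ f ∈ I, σ.degree f ≼[σ] d ∧ f.coeff d = c}
  zero_mem' := ⟨0, I.zero_mem, by simp, rfl⟩
  add_mem' := by
    rintro _ _ ⟨f, hf, hfd, rfl⟩ ⟨g, hg, hgd, rfl⟩
    exact ⟨f + g, I.add_mem hf hg, σ.degree_add_le.trans (sup_le hfd hgd), coeff_add _ _ _⟩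
  smul_mem' := by
    rintro r _ ⟨f, hf, hfd, rfl⟩
    exact ⟨r • f, I.smul_of_tower_mem r hf, σ.degree_smul_le.trans hfd, coeff_smul _ _ _⟩

variable {σ}

lemma leadingCoeff_mem_leadingCoeffIdeal {I : Ideal (MvPolynomial ι R)} {f : MvPolynomial ι R}
    (hf : f ∈ I) : σ.leadingCoeff f ∈ σ.leadingCoeffIdeal I (σ.degree f) :=
  ⟨f, hf, le_rfl, rfl⟩

lemma leadingCoeffIdeal_mono (I : Ideal (MvPolynomial ι R)) :
    Monotone (σ.leadingCoeffIdeal I) := by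
  rintro d d' hdd' _ ⟨f, hf, hfd, rfl⟩
  refine ⟨monomial (d' - d) 1 * f, I.mul_mem_left _ hf, ?_, ?_⟩
  · calc σ.toSyn (σ.degree (monomial (d' - d) 1 * f))
        ≤ σ.toSyn (σ.degree (monomial (d' - d) (1 : R)) + σ.degree f) := σ.degree_mul_le
      _ ≤ σ.toSyn (d' - d) + σ.toSyn d := by
        rw [map_add]; exact add_le_add (σ.degree_monomial_le 1) hfd
      _ = σ.toSyn d' := by rw [← map_add, tsub_add_cancel_of_le hdd']
  · rw [coeff_monomial_mul', if_pos tsub_le_self, one_mul, tsub_tsub_cancel_of_le hdd']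

lemma degree_eq_of_degree_le_of_coeff_ne_zero {f : MvPolynomial ι R} {d : ι →₀ ℕ}
    (hle : σ.degree f ≼[σ] d) (hc : f.coeff d ≠ 0) : σ.degree f = d :=
  σ.toSyn.injective (le_antisymm hle (σ.le_degree (mem_support_iff.mpr hc)))

lemma degree_lt_of_degree_le_of_coeff_eq_zero {f : MvPolynomial ι R} {d : ι →₀ ℕ}
    (hf : f ≠ 0) (hle : σ.degree f ≼[σ] d) (hc : f.coeff d = 0) : σ.degree f ≺[σ] d :=
  hle.lt_of_ne fun h => σ.coeff_degree_ne_zero_iff.mpr hf (σ.toSyn.injective h ▸ hc)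

lemma exists_degree_sub_mul_lt_of_leadingTerm_dvd {f g : MvPolynomial ι R} (hf : f ≠ 0)
    (hdvd : σ.leadingTerm g ∣ σ.leadingTerm f) :
    ∃ q, f - q * g = 0 ∨ σ.degree (f - q * g) ≺[σ] σ.degree f := by
  rw [leadingTerm, leadingTerm, monomial_dvd_monomial] at hdvd
  obtain ⟨hle, c, hc⟩ := hdvd
  replace hle : σ.degree g ≤ σ.degree f :=
    hle.resolve_left (σ.leadingCoeff_ne_zero_iff.mpr hf)
  refine ⟨monomial (σ.degree f - σ.degree g) c, or_iff_not_imp_left.mpr fun h0 => ?_⟩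
  apply degree_lt_of_degree_le_of_coeff_eq_zero h0
  · refine σ.degree_sub_le.trans (sup_le le_rfl ?_)
    calc σ.toSyn (σ.degree (monomial (σ.degree f - σ.degree g) c * g))
        ≤ σ.toSyn (σ.degree (monomial (σ.degree f - σ.degree g) c) + σ.degree g) :=
          σ.degree_mul_le
      _ ≤ σ.toSyn (σ.degree f - σ.degree g + σ.degree g) := by
        rw [map_add, map_add]; exact add_le_add_left (σ.degree_monomial_le c) _
      _ = σ.toSyn (σ.degree f) := by rw [tsub_add_cancel_of_le hle]
  · rw [coeff_sub, coeff_monomial_mul', if_pos tsub_le_self, tsub_tsub_cancel_of_le hle]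
    rw [← leadingCoeff, ← leadingCoeff, hc, mul_comm, sub_self]

theorem span_eq_of_forall_leadingTerm_dvd {I : Ideal (MvPolynomial ι R)}
    {G : Set (MvPolynomial ι R)} (hGI : G ⊆ I)
    (hcov : ∀ f ∈ I, f ≠ 0 → ∃ g ∈ G, σ.leadingTerm g ∣ σ.leadingTerm f) :
    Ideal.span G = I := by
  refine le_antisymm (Ideal.span_le.mpr hGI) fun f hf => ?_
  induction hs : σ.toSyn (σ.degree f) using WellFoundedLT.induction generalizing f with
  | _ s ih =>
    by_cases hf0 : f = 0
    · exact hf0 ▸ Ideal.zero_mem _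
    obtain ⟨g, hgG, hdvd⟩ := hcov f hf hf0
    obtain ⟨q, hq⟩ := exists_degree_sub_mul_lt_of_leadingTerm_dvd hf0 hdvd
    have hqg : q * g ∈ Ideal.span G := Ideal.mul_mem_left _ _ (Ideal.subset_span hgG)
    have hrest : f - q * g ∈ Ideal.span G := by
      rcases hq with h0 | hlt
      · exact h0 ▸ Ideal.zero_mem _
      · exact ih _ (hs ▸ hlt) _ (I.sub_mem hf (I.mul_mem_left _ (hGI hgG))) rfl
    simpa using add_mem hrest hqg

variable [Finite ι] [IsPrincipalIdealRing R]

open Submodule.IsPrincipal in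
theorem exists_finset_forall_leadingTerm_dvd (I : Ideal (MvPolynomial ι R)) :
    ∃ G : Finset (MvPolynomial ι R), (∀ g ∈ G, g ∈ I ∧ g ≠ 0) ∧
      ∀ f ∈ I, f ≠ 0 → ∃ g ∈ G, σ.leadingTerm g ∣ σ.leadingTerm f := by
  classical
  obtain ⟨D, hD⟩ :=
    (leadingCoeffIdeal_mono (σ := σ) I).exists_finset_forall_exists_le_and_apply_le
  choose g hgI hgd hgc using fun d => generator_mem (σ.leadingCoeffIdeal I d)
  refine ⟨(D.image g).filter (· ≠ 0), fun h hh => ?_, fun f hfI hf0 => ?_⟩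
  · obtain ⟨hh, hh0⟩ := Finset.mem_filter.mp hh
    obtain ⟨d, -, rfl⟩ := Finset.mem_image.mp hh
    exact ⟨hgI d, hh0⟩
  obtain ⟨d, hdD, hdf, hJ⟩ := hD (σ.degree f)
  have hdvd : generator (σ.leadingCoeffIdeal I d) ∣ σ.leadingCoeff f :=
    (mem_iff_generator_dvd _).mp (hJ (leadingCoeff_mem_leadingCoeffIdeal hfI))
  have hc : (g d).coeff d ≠ 0 := by
    rw [hgc]
    rintro h
    rw [h, zero_dvd_iff, leadingCoeff_eq_zero_iff] at hdvd
    exact hf0 hdvd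
  have hdeg := degree_eq_of_degree_le_of_coeff_ne_zero (hgd d) hc
  refine ⟨g d, Finset.mem_filter.mpr ⟨Finset.mem_image_of_mem g hdD, ?_⟩, ?_⟩
  · rintro h
    simp [h] at hc
  · rw [leadingTerm, leadingTerm, leadingCoeff, hdeg, hgc, monomial_dvd_monomial]
    exact ⟨Or.inr hdf, hdvd⟩

end MonomialOrder

section GroebnerBasis

variable {l : ℕ} (σ : MonomialOrder (Fin l))

lemma LMon_eq_leadingTerm (f : MvPolynomial (Fin l) ℤ) : LMon σ f = σ.leadingTerm f := rfl

theorem exists_minStrongGB (I : Ideal (MvPolynomial (Fin l) ℤ)) : ∃ G, MinStrongGB σ G I := by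
  obtain ⟨G₀, hG₀, hcov₀⟩ := σ.exists_finset_forall_leadingTerm_dvd I
  set Covers : Finset (MvPolynomial (Fin l) ℤ) → Prop :=
    fun G => ∀ f ∈ I, f ≠ 0 → ∃ g ∈ G, σ.leadingTerm g ∣ σ.leadingTerm f
  obtain ⟨G, hG, hmin⟩ := (G₀.powerset.filter Covers).exists_min_image Finset.card
    ⟨G₀, Finset.mem_filter.mpr ⟨Finset.mem_powerset_self G₀, hcov₀⟩⟩
  obtain ⟨hGG₀, hcov⟩ := Finset.mem_filter.mp hG
  rw [Finset.mem_powerset] at hGG₀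
  refine ⟨G, fun g hg => (hG₀ g (hGG₀ hg)).2,
    MonomialOrder.span_eq_of_forall_leadingTerm_dvd (fun g hg => (hG₀ g (hGG₀ hg)).1) hcov,
    hcov, fun g hg g' hg' hne hdvd => ?_⟩
  -- `g'` is redundant: whatever its leading term divides, so does that of `g`
  have hcov' : Covers (G.erase g') := fun f hf hf0 => by
    obtain ⟨h, hh, hhf⟩ := hcov f hf hf0
    by_cases hh' : h = g'
    · exact ⟨g, Finset.mem_erase.mpr ⟨hne, hg⟩, hdvd.trans (hh' ▸ hhf)⟩
    · exact ⟨h, Finset.mem_erase.mpr ⟨hh', hh⟩, hhf⟩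
  have := hmin (G.erase g') (Finset.mem_filter.mpr
    ⟨Finset.mem_powerset.mpr ((G.erase_subset g').trans hGG₀), hcov'⟩)
  exact (Finset.card_erase_lt_of_mem hg').not_ge this

end GroebnerBasis

lemma Finsupp.eq_single_one_of_le_of_ne_zero {ι : Type*} {d : ι →₀ ℕ} {k : ι}
    (hle : d ≤ Finsupp.single k 1) (h0 : d ≠ 0) : d = Finsupp.single k 1 := by
  classical
  obtain ⟨n, rfl⟩ : ∃ n, d = Finsupp.single k n := by
    refine Finsupp.support_subset_singleton'.mp fun j hj => ?_
    have := hle j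
    rw [Finsupp.mem_support_iff] at hj
    rw [Finset.mem_singleton]
    by_contra hjk
    rw [Finsupp.single_eq_of_ne hjk] at this
    omega
  have h1 := hle k
  simp only [Finsupp.single_eq_same] at h1
  have : n ≠ 0 := by rintro rfl; simp at h0
  rw [show n = 1 by omega]

section LinearForm

open MvPolynomial
open scoped MonomialOrder

variable {l : ℕ}

lemma coeff_single_mul_sum_C_mul_X {R : Type*} [CommSemiring R] (A : MvPolynomial (Fin l) R)
    (v : Fin l → R) (k : Fin l) :
    (A * ∑ j, C (v j) * X j).coeff (Finsupp.single k 1) = constantCoeff A * v k := by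
  classical
  simp only [Finset.mul_sum, mul_left_comm A, coeff_C_mul, coeff_sum, coeff_mul_X']
  simp [constantCoeff_eq, mul_comm]

lemma coeff_single_sum_C_mul_X {R : Type*} [CommSemiring R] (v : Fin l → R) (k : Fin l) :
    (∑ j, C (v j) * X j).coeff (Finsupp.single k 1) = v k := by
  simpa using coeff_single_mul_sum_C_mul_X 1 v k

lemma coeff_single_mul_intForm (A : MvPolynomial (Fin l) ℤ) (v : Fin l → ℤ) (k : Fin l) :
    (A * intForm v).coeff (Finsupp.single k 1) = constantCoeff A * v k :=
  coeff_single_mul_sum_C_mul_X A v k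

lemma coeff_intForm (v : Fin l → ℤ) (k : Fin l) :
    (intForm v).coeff (Finsupp.single k 1) = v k :=
  coeff_single_sum_C_mul_X v k

lemma constantCoeff_intForm (v : Fin l → ℤ) : constantCoeff (intForm v) = 0 := by
  simp [intForm]

lemma intForm_add (v w : Fin l → ℤ) : intForm (v + w) = intForm v + intForm w := by
  simp [intForm, add_mul, Finset.sum_add_distrib]

lemma intForm_smul (c : ℤ) (v : Fin l → ℤ) : intForm (c • v) = c • intForm v := by
  simp [intForm, Finset.smul_sum, smul_eq_C_mul, mul_assoc]

lemma map_intForm {S : Type*} [CommRing S] (f : ℤ →+* S) (v : Fin l → ℤ) :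
    map f (intForm v) = ∑ k, C (f (v k)) * X k := by
  simp [intForm]

lemma exists_eq_single_of_mem_support_intForm {v : Fin l → ℤ} {d : Fin l →₀ ℕ}
    (hd : d ∈ (intForm v).support) : ∃ k, d = Finsupp.single k 1 := by
  classical
  rw [mem_support_iff, intForm, coeff_sum] at hd
  obtain ⟨k, -, hk⟩ := Finset.exists_ne_zero_of_sum_ne_zero hd
  rw [coeff_C_mul, coeff_X] at hk
  exact ⟨k, (ite_ne_right_iff.mp (right_ne_zero_of_mul hk)).1.symm⟩

variable (σ : MonomialOrder (Fin l))

lemma exists_degree_intForm_eq_single {v : Fin l → ℤ} (hv : v ≠ 0) :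
    ∃ k, v k ≠ 0 ∧ σ.degree (intForm v) = Finsupp.single k 1 := by
  have hne : intForm v ≠ 0 := by
    obtain ⟨k, hk⟩ := Function.ne_iff.mp hv
    exact fun h => hk (by simpa [h] using (coeff_intForm v k).symm)
  obtain ⟨k, hk⟩ := exists_eq_single_of_mem_support_intForm (σ.degree_mem_support hne)
  refine ⟨k, ?_, hk⟩
  rw [← coeff_intForm v k, ← hk]
  exact σ.coeff_degree_ne_zero_iff.mpr hne

lemma single_le_degree_intForm {v : Fin l → ℤ} {k : Fin l} (hk : v k ≠ 0) :
    Finsupp.single k 1 ≼[σ] σ.degree (intForm v) :=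
  σ.le_degree (mem_support_iff.mpr (by rwa [coeff_intForm]))

lemma leadingTerm_smul_intForm {c : ℤ} (hc : c ≠ 0) {v : Fin l → ℤ} {k : Fin l}
    (hk : σ.degree (intForm v) = Finsupp.single k 1) :
    σ.leadingTerm (c • intForm v) = monomial (Finsupp.single k 1) (c * v k) := by
  rw [MonomialOrder.leadingTerm, MonomialOrder.leadingCoeff,
    σ.degree_smul_of_isRegular (IsRegular.of_ne_zero hc), hk, coeff_smul, coeff_intForm,
    smul_eq_mul]

end LinearForm

section Saturation

open MvPolynomial
open scoped MonomialOrder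

variable {l : ℕ} {ι : Type*} {v : ι → Fin l → ℤ}

lemma intForm_mem_span {w : Fin l → ℤ} (hw : w ∈ Submodule.span ℤ (Set.range v)) :
    intForm w ∈ Ideal.span (Set.range fun i => intForm (v i)) := by
  induction hw using Submodule.span_induction with
  | mem w hw =>
    obtain ⟨i, rfl⟩ := hw
    exact Ideal.subset_span ⟨i, rfl⟩
  | zero => simp [intForm]
  | add w w' _ _ hw hw' => rw [intForm_add]; exact add_mem hw hw'
  | smul c w _ hw => rw [intForm_smul]; exact Submodule.smul_of_tower_mem _ c hw

variable [Fintype ι]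

lemma constantCoeff_eq_zero_of_mem_span {g : MvPolynomial (Fin l) ℤ}
    (hg : g ∈ Ideal.span (Set.range fun i => intForm (v i))) : constantCoeff g = 0 := by
  obtain ⟨c, rfl⟩ := Ideal.mem_span_range_iff_exists_fun.mp hg
  simp [constantCoeff_intForm]

lemma coeff_single_mem_span {g : MvPolynomial (Fin l) ℤ}
    (hg : g ∈ Ideal.span (Set.range fun i => intForm (v i))) :
    (fun k => g.coeff (Finsupp.single k 1)) ∈ Submodule.span ℤ (Set.range v) := by
  obtain ⟨c, rfl⟩ := Ideal.mem_span_range_iff_exists_fun.mp hg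
  have : (fun k => (∑ i, c i * intForm (v i)).coeff (Finsupp.single k 1)) =
      ∑ i, constantCoeff (c i) • v i := by
    ext k
    simp [coeff_sum, coeff_single_mul_intForm]
  rw [this]
  exact Submodule.sum_mem _ fun i _ => Submodule.smul_mem _ _ (Submodule.subset_span ⟨i, rfl⟩)

variable {σ : MonomialOrder (Fin l)} {p : ℕ}

lemma degree_eq_single_of_mem_span {g : MvPolynomial (Fin l) ℤ}
    (hg : g ∈ Ideal.span (Set.range fun i => intForm (v i))) (hg0 : g ≠ 0) {k : Fin l}
    (hle : σ.degree g ≤ Finsupp.single k 1) : σ.degree g = Finsupp.single k 1 := by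
  refine Finsupp.eq_single_one_of_le_of_ne_zero hle fun h0 => hg0 ?_
  rw [σ.eq_C_of_degree_eq_zero h0, MonomialOrder.leadingCoeff, h0, ← constantCoeff_eq,
    constantCoeff_eq_zero_of_mem_span hg, map_zero]

lemma exists_mem_span_apply_eq_of_sigmaLucky (hp : p.Prime)
    (hlucky : SigmaLucky σ p (Ideal.span (Set.range fun i => intForm (v i))))
    {h : Fin l → ℤ} (hph : (p : ℤ) • h ∈ Submodule.span ℤ (Set.range v)) {k : Fin l}
    (hk : σ.degree (intForm h) = Finsupp.single k 1) :
    ∃ m ∈ Submodule.span ℤ (Set.range v),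
      m k = h k ∧ ∀ j, m j ≠ 0 → Finsupp.single j 1 ≼[σ] Finsupp.single k 1 := by
  obtain ⟨G, hG⟩ := exists_minStrongGB σ (Ideal.span (Set.range fun i => intForm (v i)))
  have hGluck := hlucky G hG
  obtain ⟨hG0, hGI, hcov, -⟩ := hG
  have hp0 : (p : ℤ) ≠ 0 := by exact_mod_cast hp.ne_zero
  have hh0 : intForm h ≠ 0 :=
    σ.ne_zero_of_degree_ne_zero (hk ▸ Finsupp.single_ne_zero.mpr one_ne_zero)
  have hhk : h k ≠ 0 := by
    rw [← coeff_intForm h k, ← hk]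
    exact σ.coeff_degree_ne_zero_iff.mpr hh0
  have hpI := intForm_mem_span hph
  rw [intForm_smul] at hpI
  obtain ⟨g, hgG, hdvd⟩ := hcov _ hpI (smul_ne_zero hp0 hh0)
  have hgI : g ∈ Ideal.span (Set.range fun i => intForm (v i)) := hGI ▸ Ideal.subset_span hgG
  rw [LMon_eq_leadingTerm, LMon_eq_leadingTerm, leadingTerm_smul_intForm σ hp0 hk,
    MonomialOrder.leadingTerm, monomial_dvd_monomial] at hdvd
  obtain ⟨hle, hdvd⟩ := hdvd
  have hdeg := degree_eq_single_of_mem_span hgI (hG0 g hgG)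
    (hle.resolve_left (mul_ne_zero hp0 hhk))
  obtain ⟨q, hq⟩ : σ.leadingCoeff g ∣ h k := by
    have hcop : IsCoprime (p : ℤ) (σ.leadingCoeff g) :=
      (Nat.prime_iff_prime_int.mp hp).coprime_iff_not_dvd.mpr (hGluck g hgG)
    exact hcop.symm.dvd_of_dvd_mul_left hdvd
  refine ⟨q • fun j => g.coeff (Finsupp.single j 1),
    Submodule.smul_mem _ _ (coeff_single_mem_span hgI), ?_, fun j hj => ?_⟩
  · rw [Pi.smul_apply, smul_eq_mul, ← hdeg, hq, mul_comm]
    rfl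
  · rw [← hdeg]
    exact σ.le_degree (mem_support_iff.mpr (right_ne_zero_of_mul hj))

theorem mem_span_of_smul_mem_span_of_sigmaLucky (hp : p.Prime)
    (hlucky : SigmaLucky σ p (Ideal.span (Set.range fun i => intForm (v i))))
    {h : Fin l → ℤ} (hph : (p : ℤ) • h ∈ Submodule.span ℤ (Set.range v)) :
    h ∈ Submodule.span ℤ (Set.range v) := by
  induction hs : σ.toSyn (σ.degree (intForm h)) using WellFoundedLT.induction generalizing h with
  | _ s ih =>
    by_cases h0 : h = 0
    · exact h0 ▸ zero_mem _
    obtain ⟨k, -, hk⟩ := exists_degree_intForm_eq_single σ h0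
    obtain ⟨m, hm, hmk, hmj⟩ := exists_mem_span_apply_eq_of_sigmaLucky hp hlucky hph hk
    -- `h - m` vanishes at `k` and is supported below `x_k`, so its leading variable is smaller
    have hpe : (p : ℤ) • (h - m) ∈ Submodule.span ℤ (Set.range v) := by
      rw [smul_sub]
      exact sub_mem hph (Submodule.smul_mem _ _ hm)
    have he : h - m ∈ Submodule.span ℤ (Set.range v) := by
      by_cases he0 : h - m = 0
      · exact he0 ▸ zero_mem _
      obtain ⟨k', hk'0, hk'⟩ := exists_degree_intForm_eq_single σ he0
      have hne : k' ≠ k := by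
        rintro rfl
        simp [hmk] at hk'0
      have hle : Finsupp.single k' 1 ≼[σ] Finsupp.single k 1 := by
        by_cases hh : h k' = 0
        · exact hmj k' (by simpa [hh] using hk'0)
        · exact hk ▸ single_le_degree_intForm σ hh
      refine ih _ ?_ hpe rfl
      rw [← hs, hk', hk]
      exact hle.lt_of_ne fun heq =>
        hne (Finsupp.single_left_injective one_ne_zero (σ.toSyn.injective heq))
    simpa using add_mem he hm

end Saturation

lemma exists_lt_dvd_of_not_squarefree_prod {R ι : Type*} [CommMonoidWithZero R]
    [IsCancelMulZero R] [DecompositionMonoid R] [Fintype ι] [LinearOrder ι] {f : ι → R}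
    (hirr : ∀ i, Irreducible (f i)) (h : ¬ Squarefree (∏ i, f i)) :
    ∃ i j, i < j ∧ f i ∣ f j := by
  by_contra! hdvd
  refine h (Finset.squarefree_prod_of_pairwise_isCoprime (fun i _ j _ hij => ?_)
    fun i _ => (hirr i).squarefree)
  refine (hirr i).isRelPrime_iff_not_dvd.mpr fun hij' => ?_
  rcases hij.lt_or_gt with hlt | hlt
  · exact hdvd i j hlt hij'
  · exact hdvd j i hlt ((hirr i).associated_of_dvd (hirr j) hij').symm.dvd

section Reduction

open MvPolynomial

variable {l : ℕ}

lemma irreducible_sum_C_mul_X {K : Type*} [Field K] {v : Fin l → K} (hv : v ≠ 0) :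
    Irreducible (∑ k, C (v k) * X k) := by
  obtain ⟨k, hk⟩ := Function.ne_iff.mp hv
  have hne : (∑ k, C (v k) * X k) ≠ 0 := fun h0 => hk (by
    simpa [h0] using (coeff_single_sum_C_mul_X v k).symm)
  refine irreducible_of_totalDegree_eq_one
    ((IsHomogeneous.sum _ _ _ fun j _ => isHomogeneous_C_mul_X (v j) j).totalDegree hne)
    fun x hx => isUnit_iff_ne_zero.mpr ?_
  rintro rfl
  have := hx (Finsupp.single k 1)
  rw [coeff_single_sum_C_mul_X, zero_dvd_iff] at this
  exact hk this

lemma irreducible_map_intForm {p : ℕ} [Fact p.Prime] {v : Fin l → ℤ}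
    (hv : ∃ k, ¬ (p : ℤ) ∣ v k) :
    Irreducible (map (Int.castRingHom (ZMod p)) (intForm v)) := by
  rw [map_intForm]
  obtain ⟨k, hk⟩ := hv
  refine irreducible_sum_C_mul_X (Function.ne_iff.mpr ⟨k, ?_⟩)
  simpa [ZMod.intCast_zmod_eq_zero_iff_dvd] using hk

lemma exists_dvd_sub_mul_of_map_intForm_dvd {p : ℕ} {u w : Fin l → ℤ}
    (h : map (Int.castRingHom (ZMod p)) (intForm u) ∣
      map (Int.castRingHom (ZMod p)) (intForm w)) :
    ∃ c : ℤ, ∀ k, (p : ℤ) ∣ w k - c * u k := by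
  obtain ⟨A, hA⟩ := h
  obtain ⟨c, hc⟩ := ZMod.intCast_surjective (constantCoeff A)
  refine ⟨c, fun k => (ZMod.intCast_zmod_eq_zero_iff_dvd _ p).mp ?_⟩
  have hk := congrArg (coeff (Finsupp.single k 1)) hA
  rw [map_intForm, map_intForm, mul_comm, coeff_single_mul_sum_C_mul_X, ← hc,
    coeff_single_sum_C_mul_X] at hk
  push_cast
  simp only [eq_intCast] at hk
  rw [hk]
  ring

end Reduction

theorem adim_iInter_hypSet_zero {K : Type*} [Field K] {κ l : ℕ} {W : Fin κ → Fin l → K}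
    (hW : LinearIndependent K W) : adim K (⋂ j, hypSet K (W j) 0) = l - κ := by
  set A : Matrix (Fin κ) (Fin l) K := Matrix.of W
  have hset : (⋂ j, hypSet K (W j) 0) =
      ((LinearMap.ker A.mulVecLin).toAffineSubspace : Set (Fin l → K)) := by
    ext x
    simp [hypSet, A, Matrix.mulVec, dotProduct, funext_iff]
  have hne : (⋂ j, hypSet K (W j) 0) ≠ ∅ :=
    Set.nonempty_iff_ne_empty.mp ⟨0, by simp [hypSet]⟩
  have hrank := A.mulVecLin.finrank_range_add_finrank_ker
  rw [← Matrix.rank, LinearIndependent.rank_matrix (M := A) hW, Module.finrank_fin_fun,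
    Fintype.card_fin] at hrank
  rw [adim, if_neg hne, hset, AffineSubspace.affineSpan_coe,
    Submodule.toAffineSubspace_direction]
  omega

lemma not_linearIndependent_of_dvd_sub_mul {l : ℕ} {w : Fin 2 → Fin l → ℤ} {p : ℤ}
    (hp : ¬ IsUnit p)
    (hsat : ∀ h, p • h ∈ Submodule.span ℤ (Set.range w) →
      h ∈ Submodule.span ℤ (Set.range w))
    {c : ℤ} (hc : ∀ k, p ∣ w 1 k - c * w 0 k) :
    ¬ LinearIndependent ℚ fun r k => (w r k : ℚ) := by
  intro hind
  set h : Fin l → ℤ := fun k => (w 1 k - c * w 0 k) / p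
  have hph : p • h = w 1 - c • w 0 := by
    ext k
    simp [h, Int.mul_ediv_cancel' (hc k)]
  have hmem : p • h ∈ Submodule.span ℤ (Set.range w) := hph ▸
    sub_mem (Submodule.subset_span ⟨1, rfl⟩)
      (Submodule.smul_mem _ c (Submodule.subset_span ⟨0, rfl⟩))
  obtain ⟨x, hx⟩ := (Submodule.mem_span_range_iff_exists_fun ℤ).mp (hsat h hmem)
  -- from `w 1 - c w 0 = p (x 0 w 0 + x 1 w 1)`
  have hrel : ∑ r, ![((c + p * x 0 : ℤ) : ℚ), ((p * x 1 - 1 : ℤ) : ℚ)] r •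
      (fun k => (w r k : ℚ)) = 0 := by
    ext k
    have h1 := congrFun hph k
    have h2 := congrFun hx k
    simp only [Fin.sum_univ_two, Pi.smul_apply, smul_eq_mul, Finset.sum_apply,
      Pi.sub_apply] at h1 h2
    simp only [Fin.sum_univ_two, Pi.add_apply, Pi.smul_apply, smul_eq_mul, Pi.zero_apply,
      Matrix.cons_val_zero, Matrix.cons_val_one]
    rw [← h2] at h1
    have : ((c + p * x 0) * w 0 k + (p * x 1 - 1) * w 1 k : ℤ) = 0 := by linear_combination h1
    exact_mod_cast this
  have h1 := Fintype.linearIndependent_iff.mp hind _ hrel 1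
  rw [Matrix.cons_val_one, Matrix.cons_val_zero, Int.cast_eq_zero, sub_eq_zero] at h1
  exact hp (IsUnit.of_mul_eq_one (x 1) h1)

/-- Theorem 6.3: if `p` is `(σ,2)`-lucky for the central arrangement `𝒜`
(with primitive, pairwise non-proportional integral forms), then `p` is good for `𝒜`, i.e.
the reduction of `Q(𝒜) = ∏ αᵢ` modulo `p` is squarefree. -/
theorem stmt13 {l n : ℕ} (a : Fin n → Fin l → ℤ) (hprim : Primitive a)
    (hdist : ∀ i j : Fin n, i ≠ j → ∀ c : ℚ, ¬ ∀ k, (a j k : ℚ) = c * (a i k : ℚ))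
    (σ : MonomialOrder (Fin l)) (p : ℕ) (hp : p.Prime)
    (hlucky : SigmaKLucky σ a 2 p) :
    Squarefree (MvPolynomial.map (Int.castRingHom (ZMod p)) (∏ i, intForm (a i))) := by
  have : Fact p.Prime := ⟨hp⟩
  by_contra hsq
  rw [map_prod] at hsq
  obtain ⟨i, j, hij, hdvd⟩ := exists_lt_dvd_of_not_squarefree_prod
    (fun i => irreducible_map_intForm (hprim i p hp)) hsq
  obtain ⟨c, hc⟩ := exists_dvd_sub_mul_of_map_intForm_dvd hdvd
  set t : Fin 2 → Fin n := ![i, j]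
  have ht : StrictMono t := Fin.strictMono_iff_lt_succ.mpr fun r => by fin_cases r; exact hij
  have hind : LinearIndependent ℚ fun r k => (a (t r) k : ℚ) := by
    obtain ⟨k, hk⟩ := hprim i p hp
    have hu : (fun k => (a i k : ℚ)) ≠ 0 := Function.ne_iff.mpr ⟨k, fun h => hk (by
      rw [Int.cast_eq_zero.mp h]
      exact dvd_zero _)⟩
    have hrows :
        (fun r k => (a (t r) k : ℚ)) = ![fun k => (a i k : ℚ), fun k => (a j k : ℚ)] := by
      ext r k
      fin_cases r <;> rfl
    rw [hrows]
    exact (LinearIndependent.pair_iff' hu).mpr fun c hc =>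
      hdist i j hij.ne c fun k => (congrFun hc k).symm
  have hluckyij := hlucky t ht (adim_iInter_hypSet_zero hind)
  exact not_linearIndependent_of_dvd_sub_mul (Nat.prime_iff_prime_int.mp hp).not_isUnit
    (fun _ => mem_span_of_smul_mem_span_of_sigmaLucky hp hluckyij) hc hind
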